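/- arXiv:2410.17837 — 3 statements merged into one kernel-verified Lean document; each statement's English description precedes it below -/
import Mathlib

section
/- Let G be a connected finite simple graph on n vertices with diameter d. Then for every real number μ one has m_G(μ) ≤ n − d; moreover, if μ is not an eigenvalue of the path P_{d+1}, i.e., μ ∉ { 2·cos(kπ/(d+2)) : k = 1, …, d+1 }, then m_G(μ) ≤ n − d − 1. -/
/-!
A shortest path between two vertices at distance `d = diam G` is an induced copy of the path
`P_{d+1}` in `G`, so `A(P_{d+1}) - μI` is a principal submatrix of `A(G) - μI`. Comparing ranks,
`m_G(μ) + (d + 1) ≤ n + m_{P_{d+1}}(μ)`. On the path, the kernel equations are the Chebyshev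
recurrence, so a kernel vector satisfies `x_k = U_k(μ/2) x_0`: it is determined by `x_0`, whence
`m_{P_{d+1}}(μ) ≤ 1`, and the last equation reads `U_{d+1}(μ/2) x_0 = 0`, whence
`m_{P_{d+1}}(μ) = 0` unless `μ/2` is a root `cos(kπ/(d+2))` of `U_{d+1}`.
-/

open Classical in
/-- The adjacency matrix of a finite simple graph over `ℝ`. -/
noncomputable def adjMat {V : Type} [Fintype V] (G : SimpleGraph V) : Matrix V V ℝ :=
  Matrix.of fun i j => if G.Adj i j then (1 : ℝ) else 0

/-- `eigMult G μ` is the multiplicity of `μ` as an eigenvalue of the adjacency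
matrix of `G`, i.e. the dimension of the kernel of `A(G) - μ·I`. -/
noncomputable def eigMult {V : Type} [Fintype V] [DecidableEq V]
    (G : SimpleGraph V) (μ : ℝ) : ℕ :=
  Module.finrank ℝ (LinearMap.ker (adjMat G - μ • (1 : Matrix V V ℝ)).mulVecLin)

namespace SimpleGraph

variable {V : Type} {G : SimpleGraph V} {u v : V}

theorem Walk.dist_getVert_getVert_of_length_eq_dist (w : G.Walk u v)
    (hw : w.length = G.dist u v) {i j : ℕ} (hij : i ≤ j) (hj : j ≤ w.length) :
    G.dist (w.getVert i) (w.getVert j) = j - i := by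
  have hsub : ((w.take j).drop i).IsSubwalk w :=
    (Walk.isSubwalk_drop _ i).trans (w.isSubwalk_take j)
  have h := length_eq_dist_of_subwalk hw hsub
  rw [Walk.drop_length, Walk.take_length, min_eq_left hj] at h
  rwa [Walk.take_getVert, min_eq_right hij, eq_comm] at h

def Walk.pathGraphEmbeddingOfLengthEqDist (w : G.Walk u v) (hw : w.length = G.dist u v) :
    pathGraph (w.length + 1) ↪g G where
  toFun i := w.getVert i
  inj' i j hij := Fin.ext <| (w.isPath_of_length_eq_dist hw).getVert_injOn
    i.is_le j.is_le hij
  map_rel_iff' {i j} := by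
    change G.Adj (w.getVert i) (w.getVert j) ↔ _
    rw [pathGraph_adj, ← dist_eq_one_iff_adj]
    rcases le_total (i : ℕ) j with hij | hij
    · rw [w.dist_getVert_getVert_of_length_eq_dist hw hij (by omega)]
      omega
    · rw [dist_comm, w.dist_getVert_getVert_of_length_eq_dist hw hij (by omega)]
      omega

theorem Connected.nonempty_pathGraph_diam_embedding [Finite V] (hG : G.Connected) :
    Nonempty (pathGraph (G.diam + 1) ↪g G) := by
  have := hG.nonempty
  obtain ⟨u, v, huv⟩ := G.exists_dist_eq_diam
  obtain ⟨w, hw⟩ := hG.exists_walk_length_eq_dist u v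
  rw [← huv, ← hw]
  exact ⟨w.pathGraphEmbeddingOfLengthEqDist hw⟩

end SimpleGraph

open SimpleGraph Matrix

section Multiplicity

variable {V W : Type} [Fintype V] [Fintype W]

theorem adjMat_submatrix_embedding {G : SimpleGraph V} {H : SimpleGraph W} (f : H ↪g G) :
    (adjMat G).submatrix f f = adjMat H := by
  ext i j
  classical
  simp only [adjMat, Matrix.submatrix_apply, Matrix.of_apply]
  exact if_congr f.map_adj_iff rfl rfl

variable [DecidableEq V] [DecidableEq W]

theorem eigMult_add_rank (G : SimpleGraph V) (μ : ℝ) :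
    eigMult G μ + (adjMat G - μ • (1 : Matrix V V ℝ)).rank = Fintype.card V := by
  rw [eigMult, Matrix.rank, add_comm, LinearMap.finrank_range_add_finrank_ker,
    Module.finrank_fintype_fun_eq_card]

theorem eigMult_add_card_le_of_embedding {G : SimpleGraph V} {H : SimpleGraph W} (f : H ↪g G)
    (μ : ℝ) : eigMult G μ + Fintype.card W ≤ Fintype.card V + eigMult H μ := by
  have hsub : (adjMat G - μ • (1 : Matrix V V ℝ)).submatrix f f
      = adjMat H - μ • (1 : Matrix W W ℝ) := by
    ext i j
    simp [← adjMat_submatrix_embedding f, Matrix.one_apply, f.injective.eq_iff]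
  have hrank := Matrix.rank_submatrix_le (adjMat G - μ • (1 : Matrix V V ℝ)) f f
  rw [hsub] at hrank
  have := eigMult_add_rank G μ
  have := eigMult_add_rank H μ
  omega

end Multiplicity

namespace Polynomial.Chebyshev

theorem eq_eval_U_mul_of_recurrence {y : ℕ → ℝ} {μ : ℝ} {N : ℕ} (h₁ : y 1 = μ * y 0)
    (h : ∀ k, k + 2 ≤ N → y (k + 2) = μ * y (k + 1) - y k) :
    ∀ k ≤ N, y k = (U ℝ k).eval (μ / 2) * y 0 := by
  intro k hk
  induction k using Nat.twoStepInduction with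
  | zero => simp
  | one =>
    rw [h₁, Nat.cast_one, U_one]
    simp only [eval_mul, eval_ofNat, eval_X]
    ring
  | more k ih₁ ih₂ =>
    rw [h k hk, ih₁ (by omega), ih₂ (by omega)]
    push_cast
    rw [U_add_two]
    simp only [eval_sub, eval_mul, eval_ofNat, eval_X]
    ring

theorem eval_U_half_ne_zero {m : ℕ} {μ : ℝ}
    (h : ∀ k : ℕ, 1 ≤ k → k ≤ m → μ ≠ 2 * Real.cos (k * Real.pi / (m + 1))) :
    (U ℝ m).eval (μ / 2) ≠ 0 := by
  intro h0
  have hroot : μ / 2 ∈ (U ℝ m).roots :=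
    (mem_roots (U_ne_zero ℝ m (by omega))).mpr h0
  rw [roots_U_real, Finset.mem_val, Finset.mem_image] at hroot
  obtain ⟨k, hk, hcos⟩ := hroot
  refine h (k + 1) (by omega) (Finset.mem_range.mp hk) ?_
  push_cast
  rw [hcos]
  ring

end Polynomial.Chebyshev

open Polynomial Polynomial.Chebyshev Finset

section PathGraph

variable {m n : ℕ} {μ : ℝ}

def extendByZero (x : Fin m → ℝ) (k : ℕ) : ℝ :=
  if h : k < m then x ⟨k, h⟩ else 0

@[simp]
theorem extendByZero_val (x : Fin m → ℝ) (i : Fin m) : extendByZero x i = x i :=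
  dif_pos i.isLt

theorem sum_range_ite_eq_extendByZero (x : Fin m → ℝ) (c : ℕ) :
    ∑ k ∈ range m, (if k = c then extendByZero x k else 0) = extendByZero x c := by
  rw [sum_ite_eq']
  split_ifs
  · rfl
  · simp_all [extendByZero]

theorem adjMat_pathGraph_mulVec_apply (x : Fin m → ℝ) (i : Fin m) :
    (adjMat (pathGraph m) *ᵥ x) i
      = extendByZero x (i + 1) + if (i : ℕ) = 0 then 0 else extendByZero x (i - 1) := by
  have hsplit (k : ℕ) : (if (i : ℕ) + 1 = k ∨ k + 1 = i then extendByZero x k else 0)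
      = (if k = i + 1 then extendByZero x k else 0)
        + if (i : ℕ) = 0 then 0 else if k = i - 1 then extendByZero x k else 0 := by
    split_ifs <;> first | omega | simp
  have hrow : (adjMat (pathGraph m) *ᵥ x) i
      = ∑ k ∈ range m, if (i : ℕ) + 1 = k ∨ k + 1 = i then extendByZero x k else 0 := by
    rw [← Fin.sum_univ_eq_sum_range]
    simp [adjMat, Matrix.mulVec, dotProduct, pathGraph_adj, extendByZero]
  rw [hrow, sum_congr rfl fun k _ => hsplit k, sum_add_distrib, sum_range_ite_eq_extendByZero]
  split_ifs
  · simp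
  · rw [sum_range_ite_eq_extendByZero]

theorem extendByZero_eq_eval_U_mul_of_mulVec_eq_zero {x : Fin (n + 1) → ℝ}
    (hx : (adjMat (pathGraph (n + 1)) - μ • (1 : Matrix _ _ ℝ)) *ᵥ x = 0) :
    ∀ k ≤ n + 1, extendByZero x k = (U ℝ k).eval (μ / 2) * x 0 := by
  have hrow (i : Fin (n + 1)) : extendByZero x (i + 1)
      + (if (i : ℕ) = 0 then 0 else extendByZero x (i - 1)) = μ * extendByZero x i := by
    have := congrFun hx i
    rw [sub_mulVec, smul_mulVec, one_mulVec, Pi.sub_apply, adjMat_pathGraph_mulVec_apply,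
      Pi.zero_apply, sub_eq_zero] at this
    rwa [extendByZero_val]
  rw [← extendByZero_val x 0, Fin.val_zero]
  refine eq_eval_U_mul_of_recurrence ?_ fun k hk => ?_
  · simpa using hrow 0
  · have := hrow ⟨k + 1, by omega⟩
    simp only [Nat.add_eq_zero_iff, one_ne_zero, and_false, if_false,
      Nat.add_sub_cancel] at this
    linarith

theorem eq_zero_of_mulVec_eq_zero_of_apply_zero {x : Fin (n + 1) → ℝ}
    (hx : (adjMat (pathGraph (n + 1)) - μ • (1 : Matrix _ _ ℝ)) *ᵥ x = 0) (h₀ : x 0 = 0) :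
    x = 0 := by
  funext i
  rw [Pi.zero_apply, ← extendByZero_val x i,
    extendByZero_eq_eval_U_mul_of_mulVec_eq_zero hx i (i.is_le.trans n.le_succ), h₀, mul_zero]

theorem eigMult_pathGraph_le_one : eigMult (pathGraph (n + 1)) μ ≤ 1 := by
  set K := LinearMap.ker (adjMat (pathGraph (n + 1)) - μ • (1 : Matrix _ _ ℝ)).mulVecLin
  have hinj : Function.Injective ((LinearMap.proj 0).comp K.subtype) := by
    refine (injective_iff_map_eq_zero _).mpr fun x hx => Subtype.ext ?_
    exact eq_zero_of_mulVec_eq_zero_of_apply_zero (LinearMap.mem_ker.mp x.2) hx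
  simpa [eigMult, K] using LinearMap.finrank_le_finrank_of_injective hinj

theorem eigMult_pathGraph_eq_zero (hμ : (U ℝ (n + 1)).eval (μ / 2) ≠ 0) :
    eigMult (pathGraph (n + 1)) μ = 0 := by
  rw [eigMult, Submodule.finrank_eq_zero, LinearMap.ker_eq_bot']
  intro x hx
  refine eq_zero_of_mulVec_eq_zero_of_apply_zero hx ?_
  have hlast := extendByZero_eq_eval_U_mul_of_mulVec_eq_zero hx (n + 1) le_rfl
  rw [extendByZero, dif_neg (lt_irrefl _), Nat.cast_add_one] at hlast
  exact (mul_eq_zero.mp hlast.symm).resolve_left hμ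

end PathGraph

/-- If `G` is connected on `n` vertices with diameter `d`, then `m_G(μ) ≤ n - d` for
every real `μ`; moreover if `μ` is not an eigenvalue of the path `P_{d+1}`, i.e.
`μ ∉ {2cos(kπ/(d+2)) : k = 1, …, d+1}`, then `m_G(μ) ≤ n - d - 1`. -/
theorem stmt10 {V : Type} [Fintype V] [DecidableEq V] (G : SimpleGraph V)
    (hG : G.Connected) :
    (∀ μ : ℝ, eigMult G μ ≤ Fintype.card V - G.diam) ∧
    (∀ μ : ℝ,
      (∀ k : ℕ, 1 ≤ k → k ≤ G.diam + 1 →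
        μ ≠ 2 * Real.cos (k * Real.pi / (G.diam + 2))) →
      eigMult G μ ≤ Fintype.card V - G.diam - 1) := by
  obtain ⟨f⟩ := hG.nonempty_pathGraph_diam_embedding
  have hf (μ : ℝ) := eigMult_add_card_le_of_embedding f μ
  simp only [Fintype.card_fin] at hf
  refine ⟨fun μ => ?_, fun μ hμ => ?_⟩
  · have := eigMult_pathGraph_le_one (n := G.diam) (μ := μ)
    have := hf μ
    omega
  · have hU : (U ℝ (G.diam + 1 : ℕ)).eval (μ / 2) ≠ 0 :=
      eval_U_half_ne_zero fun k hk₁ hk₂ => by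
        convert hμ k hk₁ hk₂ using 4
        push_cast
        ring
    have := eigMult_pathGraph_eq_zero hU
    have := hf μ
    omega
end

section
/- Let G be a connected finite simple graph on n vertices with even diameter d, let P = v_1 ∼ v_2 ∼ ⋯ ∼ v_{d+1} be a diameter path of G, and suppose η(G) = n − d − 1. Then every vertex of G not on P is adjacent to at least one vertex of P, i.e., d(x, P) = 1 for every x ∈ V(G) ∖ V(P). -/
/-- The nullity `η(G)` of a finite simple graph: the dimension of the kernel of
its adjacency matrix over `ℝ`. -/
noncomputable def nullity {V : Type} [Fintype V] (G : SimpleGraph V) : ℕ :=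
  Module.finrank ℝ (LinearMap.ker (adjMat G).mulVecLin)

/-!
If some `x ∉ P` had no neighbour on `P`, pick a neighbour `y` of `x` (so `y ∉ P` as well) and
let `H` be the subgraph induced on `V(P) ∪ {x, y}`. Since `P` is a geodesic it is an induced
path, and a kernel vector `v` of `A(H)` is determined by `v (p 0)`: the row of `x` gives
`v y = 0`, the row of `p k` then gives `v (p (k + 1))`, and the row of `y` gives `v x`.
Hence `η(H) ≤ 1`, so `rank A(G) ≥ rank A(H) ≥ d + 2`, contradicting `η(G) = n - d - 1`.
-/

section

open Matrix

theorem Submodule.finrank_le_one_of_eq_zero_of_apply_eq_zero {K ι : Type*} [Field K] [Fintype ι]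
    {U : Submodule K (ι → K)} (i₀ : ι) (h : ∀ v ∈ U, v i₀ = 0 → v = 0) :
    Module.finrank K U ≤ 1 := by
  have hinj : Function.Injective ((LinearMap.proj i₀).comp U.subtype) := by
    rw [← LinearMap.ker_eq_bot, Submodule.eq_bot_iff]
    rintro ⟨v, hv⟩ hv0
    exact Subtype.ext (h v hv hv0)
  simpa using LinearMap.finrank_le_finrank_of_injective hinj

variable {V : Type} [Fintype V]

theorem rank_adjMat_add_nullity (G : SimpleGraph V) :
    (adjMat G).rank + nullity G = Fintype.card V := by
  rw [Matrix.rank, nullity, LinearMap.finrank_range_add_finrank_ker,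
    Module.finrank_fintype_fun_eq_card]

theorem adjMat_induce (G : SimpleGraph V) (s : Set V) [Fintype s] :
    adjMat (G.induce s) = (adjMat G).submatrix (↑) (↑) :=
  rfl

theorem nullity_add_card_le (G : SimpleGraph V) (s : Set V) [Fintype s] :
    nullity G + Fintype.card s ≤ nullity (G.induce s) + Fintype.card V := by
  have := (adjMat G).rank_submatrix_le ((↑) : s → V) ((↑) : s → V)
  have := rank_adjMat_add_nullity G
  have := rank_adjMat_add_nullity (G.induce s)
  rw [adjMat_induce] at *
  omega

open Classical in
theorem adjMat_mulVec_apply (G : SimpleGraph V) (v : V → ℝ) (s : V) :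
    (adjMat G *ᵥ v) s = ∑ t, if G.Adj s t then v t else 0 := by
  simp [adjMat, Matrix.mulVec, dotProduct, ite_mul]

theorem apply_eq_zero_of_adjMat_mulVec_eq_zero {G : SimpleGraph V} {v : V → ℝ}
    (hv : adjMat G *ᵥ v = 0) {s z : V} (hsz : G.Adj s z)
    (hrest : ∀ t, G.Adj s t → t ≠ z → v t = 0) : v z = 0 := by
  have hrow := congrFun hv s
  rw [adjMat_mulVec_apply, Finset.sum_eq_single z, if_pos hsz] at hrow
  · exact hrow
  · intro t _ htz
    split_ifs with hst
    exacts [hrest t hst htz, rfl]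
  · simp

end

namespace SimpleGraph

section

variable {V : Type*} {G : SimpleGraph V} {d : ℕ} {p : Fin (d + 1) → V}

theorem exists_walk_of_chain (hadj : ∀ i : Fin d, G.Adj (p i.castSucc) (p i.succ))
    {i j : Fin (d + 1)} (hij : i ≤ j) : ∃ w : G.Walk (p i) (p j), w.length = j - i := by
  induction j using Fin.induction with
  | zero =>
    obtain rfl := Fin.le_zero_iff.mp hij
    exact ⟨.nil, by simp⟩
  | succ k ih =>
    rcases hij.eq_or_lt with rfl | hlt
    · exact ⟨.nil, by simp⟩
    · obtain ⟨w, hw⟩ := ih (Fin.le_castSucc_iff.mpr hlt)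
      refine ⟨w.concat (hadj k), ?_⟩
      have : (i : ℕ) ≤ k := Fin.le_castSucc_iff.mpr hlt
      simp only [Walk.length_concat, hw, Fin.val_castSucc, Fin.val_succ]
      omega

theorem dist_eq_of_chain (hadj : ∀ i : Fin d, G.Adj (p i.castSucc) (p i.succ))
    (hdist : G.dist (p 0) (p (Fin.last d)) = d) {i j : Fin (d + 1)} (hij : i ≤ j) :
    G.dist (p i) (p j) = j - i := by
  have walk_dist {a b : Fin (d + 1)} (hab : a ≤ b) :
      G.Reachable (p a) (p b) ∧ G.dist (p a) (p b) ≤ b - a := by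
    obtain ⟨w, hw⟩ := exists_walk_of_chain hadj hab
    exact ⟨⟨w⟩, hw ▸ dist_le w⟩
  obtain ⟨-, h0i⟩ := walk_dist (Fin.zero_le i)
  obtain ⟨reach_ij, hij⟩ := walk_dist hij
  obtain ⟨reach_jd, hjd⟩ := walk_dist (Fin.le_last j)
  have tri_i := (reach_ij.trans reach_jd).dist_triangle_right (p 0)
  have tri_j := reach_jd.dist_triangle_right (p i)
  have := j.is_le
  simp only [Fin.val_zero, Fin.val_last] at *
  -- `d = dist (p 0) (p d) ≤ i + dist (p i) (p j) + (d - j)` forces equality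
  omega

theorem injective_of_chain (hadj : ∀ i : Fin d, G.Adj (p i.castSucc) (p i.succ))
    (hdist : G.dist (p 0) (p (Fin.last d)) = d) : Function.Injective p := by
  have key {i j : Fin (d + 1)} (hij : i ≤ j) (h : p i = p j) : i = j := by
    have := dist_eq_of_chain hadj hdist hij
    rw [h, dist_self] at this
    omega
  intro i j h
  rcases le_total i j with hij | hji
  exacts [key hij h, (key hji h.symm).symm]

theorem succ_eq_or_eq_succ_of_adj_chain (hadj : ∀ i : Fin d, G.Adj (p i.castSucc) (p i.succ))
    (hdist : G.dist (p 0) (p (Fin.last d)) = d) {i j : Fin (d + 1)} (h : G.Adj (p i) (p j)) :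
    (i : ℕ) + 1 = j ∨ (j : ℕ) + 1 = i := by
  rcases le_total i j with hij | hji
  · have := dist_eq_of_chain hadj hdist hij
    rw [dist_eq_one_iff_adj.mpr h] at this
    omega
  · have := dist_eq_of_chain hadj hdist hji
    rw [dist_eq_one_iff_adj.mpr h.symm] at this
    omega

theorem card_insert_insert_range [DecidableEq V] (hp : Function.Injective p) {x y : V}
    (hx : x ∉ Set.range p) (hy : y ∉ Set.range p) (hxy : x ≠ y) :
    Fintype.card ↥(insert x (insert y (Set.range p))) = d + 3 := by
  rw [← Nat.card_eq_fintype_card, Nat.card_coe_set_eq, Set.ncard_insert_of_notMem,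
    Set.ncard_insert_of_notMem hy, Set.ncard_range_of_injective hp, Nat.card_fin]
  rintro (rfl | h)
  exacts [hxy rfl, hx h]

end

open Matrix

variable {V : Type} [DecidableEq V] {G : SimpleGraph V} {d : ℕ}
  {p : Fin (d + 1) → V}

theorem eq_zero_of_adjMat_induce_mulVec_eq_zero
    (hadj : ∀ i : Fin d, G.Adj (p i.castSucc) (p i.succ))
    (hdist : G.dist (p 0) (p (Fin.last d)) = d) {x y : V} (hx : ∀ i, ¬ G.Adj x (p i))
    (hxy : G.Adj x y) {v : ↥(insert x (insert y (Set.range p))) → ℝ}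
    (hv : adjMat (G.induce (insert x (insert y (Set.range p)))) *ᵥ v = 0)
    (h0 : v ⟨p 0, by simp⟩ = 0) : v = 0 := by
  let S : Set V := insert x (insert y (Set.range p))
  let P (i : Fin (d + 1)) : S := ⟨p i, by simp [S]⟩
  let X : S := ⟨x, by simp [S]⟩
  let Y : S := ⟨y, by simp [S]⟩
  have mem_S (t : S) : t = X ∨ t = Y ∨ ∃ i, t = P i := by
    obtain ⟨t, rfl | rfl | ⟨i, rfl⟩⟩ := t
    exacts [.inl rfl, .inr (.inl rfl), .inr (.inr ⟨i, rfl⟩)]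
  have vY : v Y = 0 := by
    refine apply_eq_zero_of_adjMat_mulVec_eq_zero hv (s := X) (z := Y) hxy fun t hXt htY => ?_
    rcases mem_S t with rfl | rfl | ⟨i, rfl⟩
    exacts [absurd hXt (G.induce S).irrefl, absurd rfl htY, absurd hXt (hx i)]
  have vP (k : Fin (d + 1)) : ∀ i ≤ k, v (P i) = 0 := by
    induction k using Fin.induction with
    | zero =>
      intro i hi
      obtain rfl := Fin.le_zero_iff.mp hi
      exact h0
    | succ k ih =>
      intro i hi
      rcases hi.eq_or_lt with rfl | hlt
      · refine apply_eq_zero_of_adjMat_mulVec_eq_zero hv (s := P k.castSucc) (z := P k.succ)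
          (hadj k) fun t hkt htk => ?_
        rcases mem_S t with rfl | rfl | ⟨j, rfl⟩
        · exact absurd hkt.symm (hx _)
        · exact vY
        · rcases succ_eq_or_eq_succ_of_adj_chain hadj hdist hkt with h | h
          · exact absurd (congrArg P (Fin.ext (by simpa using h.symm))) htk
          · exact ih j (Fin.le_def.mpr (by omega))
      · exact ih i (Fin.le_castSucc_iff.mpr hlt)
  have vX : v X = 0 := by
    refine apply_eq_zero_of_adjMat_mulVec_eq_zero hv (s := Y) (z := X) hxy.symm
      fun t hYt htX => ?_
    rcases mem_S t with rfl | rfl | ⟨i, rfl⟩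
    exacts [absurd rfl htX, absurd hYt (G.induce S).irrefl, vP i i le_rfl]
  funext t
  rcases mem_S t with rfl | rfl | ⟨i, rfl⟩
  exacts [vX, vY, vP i i le_rfl]

theorem nullity_induce_le_one (hadj : ∀ i : Fin d, G.Adj (p i.castSucc) (p i.succ))
    (hdist : G.dist (p 0) (p (Fin.last d)) = d) {x y : V} (hx : ∀ i, ¬ G.Adj x (p i))
    (hxy : G.Adj x y) : nullity (G.induce (insert x (insert y (Set.range p)))) ≤ 1 :=
  Submodule.finrank_le_one_of_eq_zero_of_apply_eq_zero ⟨p 0, by simp⟩ fun _ hv h0 =>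
    eq_zero_of_adjMat_induce_mulVec_eq_zero hadj hdist hx hxy hv h0

end SimpleGraph

theorem stmt12_general {V : Type} [Fintype V] (G : SimpleGraph V)
    (hG : G.Connected)
    (p : Fin (G.diam + 1) → V)
    (hadj : ∀ i : Fin G.diam, G.Adj (p i.castSucc) (p i.succ))
    (hdist : G.dist (p 0) (p (Fin.last G.diam)) = G.diam)
    (hnull : nullity G = Fintype.card V - G.diam - 1) :
    ∀ x : V, x ∉ Set.range p → ∃ i : Fin (G.diam + 1), G.Adj x (p i) := by
  classical
  intro x hxp
  by_contra! hx
  have : Nontrivial V := ⟨x, p 0, fun h => hxp ⟨0, h.symm⟩⟩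
  obtain ⟨y, hxy⟩ := hG.preconnected.exists_adj_of_nontrivial x
  have hyp : y ∉ Set.range p := by
    rintro ⟨i, rfl⟩
    exact hx i hxy
  have hcard := SimpleGraph.card_insert_insert_range
    (SimpleGraph.injective_of_chain hadj hdist) hxp hyp hxy.ne
  have := nullity_add_card_le G (insert x (insert y (Set.range p)))
  have := SimpleGraph.nullity_induce_le_one hadj hdist hx hxy
  have := Fintype.card_subtype_le (· ∈ insert x (insert y (Set.range p)))
  omega

/-- Let `G` be connected with even diameter `d`, let
`p 0 ∼ p 1 ∼ ⋯ ∼ p d` be a diameter path (a shortest path realizing the diameter),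
and suppose `η(G) = n - d - 1`. Then every vertex not on the path is adjacent to
some vertex of the path, i.e. `d(x, P) = 1`. -/
theorem stmt12 {V : Type} [Fintype V] (G : SimpleGraph V)
    (hG : G.Connected) (heven : Even G.diam)
    (p : Fin (G.diam + 1) → V)
    (hadj : ∀ i : Fin G.diam, G.Adj (p i.castSucc) (p i.succ))
    (hdist : G.dist (p 0) (p (Fin.last G.diam)) = G.diam)
    (hnull : nullity G = Fintype.card V - G.diam - 1) :
    ∀ x : V, x ∉ Set.range p → ∃ i : Fin (G.diam + 1), G.Adj x (p i) :=
  stmt12_general G hG p hadj hdist hnull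
end

section
/- Let G be a connected finite simple graph on n vertices with even diameter d in which no two distinct vertices have equal neighborhoods, let P = v_1 ∼ v_2 ∼ ⋯ ∼ v_{d+1} be a diameter path of G, and suppose η(G) = n − d − 1. Then no vertex of G outside P has exactly two neighbors on P. -/
/-! Write `q 0, …, q d` for the diameter path `P` and suppose `x ∉ P` is adjacent exactly to
`q s` and `q t` with `s < t`. Since `P` is geodesic, `t = s + 1` or `t = s + 2`. In both cases we
find a vertex set `S ⊇ P ∪ {x}` such that the kernel vectors of `A(G)` supported on `S` form a
space of dimension at most `|S| - d - 2`, which forces `η(G) ≤ n - d - 2`.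

Along `P`, the equations `A v = 0` read `v (q (i - 1)) + v (q (i + 1)) = 0` (with `v (q (-1))` and
`v (q (d + 1))` read as `0`), perturbed by `v x` at the neighbours of `x`. If `t = s + 1`, take
`S = P ∪ {x}`: as `d` is even, the chain of odd-indexed entries runs between two zero boundary
values and meets the perturbation exactly once, so `v x = 0`; the even-indexed entries are then
`± v (q 0)`, and the row of `x` gives `v (q 0) = 0`. If `t = s + 2`, then `x` and `q (s + 1)` have
the same neighbours on `P`, so twin-freeness supplies a vertex `y` adjacent to exactly one of them.
On `S = P ∪ {x, y}` the rows of `x` and `q (s + 1)` give `v y = 0`, the recurrence started from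
`v (q 0) = 0` leaves only `v (q (s + 1)) = -v x`, and the row of `y` gives `v x = 0`. -/

open Finset Matrix

theorem Submodule.finrank_le_card_of_eq_zero {R V : Type*} [Field R] [Fintype V]
    (K : Submodule R (V → R)) (U : Finset V) (h : ∀ v ∈ K, (∀ u ∈ U, v u = 0) → v = 0) :
    Module.finrank R K ≤ #U := by
  let restrict : K →ₗ[R] (U → R) := LinearMap.funLeft R R ((↑) : U → V) ∘ₗ K.subtype
  have hinj : Function.Injective restrict := by
    rw [← LinearMap.ker_eq_bot, LinearMap.ker_eq_bot']
    intro v hv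
    exact Subtype.ext (h v v.2 fun u hu => congrFun hv ⟨u, hu⟩)
  simpa using LinearMap.finrank_le_finrank_of_injective hinj

theorem nullity_le_card {V : Type} [Fintype V] (G : SimpleGraph V) [DecidableRel G.Adj]
    (U : Finset V) (h : ∀ v : V → ℝ, G.adjMatrix ℝ *ᵥ v = 0 → (∀ u ∈ U, v u = 0) → v = 0) :
    nullity G ≤ #U := by
  have hmat : adjMat G = G.adjMatrix ℝ := by
    ext u w
    simp only [adjMat, Matrix.of_apply, SimpleGraph.adjMatrix_apply]
    congr!
  rw [nullity, hmat]
  exact Submodule.finrank_le_card_of_eq_zero _ U fun v hv => h v hv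

theorem SimpleGraph.adjMatrix_mulVec_apply_of_support {V R : Type*} [Fintype V]
    [NonAssocSemiring R] (G : SimpleGraph V) [DecidableRel G.Adj] {S : Finset V} {v : V → R}
    (hv : ∀ u ∉ S, v u = 0) (w : V) :
    (G.adjMatrix R *ᵥ v) w = ∑ u ∈ S, if G.Adj w u then v u else 0 := by
  rw [adjMatrix_mulVec_apply, neighborFinset_eq_filter, sum_filter]
  exact (sum_subset (subset_univ S) fun u _ hu => by simp [hv u hu]).symm

theorem eq_zero_of_ite_eq_ite {M : Type*} [Zero M] {P Q : Prop} [Decidable P] [Decidable Q]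
    {c : M} (hPQ : ¬(P ↔ Q)) (h : (if P then c else 0) = if Q then c else 0) : c = 0 := by
  by_cases hP : P <;> by_cases hQ : Q <;> simp_all

/-- The shift and zero padding make the row of the `i`-th path vertex in `A v = 0` read
`shiftPad d f i + shiftPad d f (i + 2)`, also at the two ends of the path. -/
def shiftPad (d : ℕ) (f : ℕ → ℝ) : ℕ → ℝ
  | 0 => 0
  | j + 1 => if j ≤ d then f j else 0

theorem shiftPad_succ_of_le {d j : ℕ} (f : ℕ → ℝ) (hj : j ≤ d) :
    shiftPad d f (j + 1) = f j :=
  if_pos hj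

theorem sum_range_ite_neighbour (d i : ℕ) (f : ℕ → ℝ) :
    ∑ j ∈ range (d + 1), (if j = i + 1 ∨ i = j + 1 then f j else 0) =
      shiftPad d f i + shiftPad d f (i + 2) := by
  have hsplit : ∀ j, (if j = i + 1 ∨ i = j + 1 then f j else 0) =
      (if i + 1 = j then f j else 0) + (if i = j + 1 then f j else 0) := by
    intro j
    split_ifs <;> first | omega | simp
  rw [sum_congr rfl fun j _ => hsplit j, sum_add_distrib, sum_ite_eq]
  cases i with
  | zero => simp [shiftPad, add_comm, Nat.one_le_iff_ne_zero, Nat.pos_iff_ne_zero]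
  | succ k =>
    simp only [shiftPad, Nat.add_right_cancel_iff, sum_ite_eq, mem_range]
    rw [add_comm]
    congr 1 <;> split_ifs <;> first | rfl | omega

theorem eq_neg_one_pow_mul_of_add_add_two_eq_zero {a : ℕ → ℝ} {i m : ℕ}
    (h : ∀ k < m, a (i + 2 * k) + a (i + 2 * k + 2) = 0) : a (i + 2 * m) = (-1) ^ m * a i := by
  induction m with
  | zero => simp
  | succ m ih =>
    rw [show i + 2 * (m + 1) = i + 2 * m + 2 by ring]
    linear_combination h m (by omega) - ih fun k hk => h k (by omega)

/- In the following recurrences `a = shiftPad d (v ∘ q)` and `b = v x`, where `v` is a kernel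
vector and `x` is adjacent to `q s` and `q (s + 1)` (a triangle on the path) or to `q s` and
`q (s + 2)` (a square). -/

theorem triangle_recurrence_coeff_eq_zero {d s : ℕ} {a : ℕ → ℝ} {b : ℝ} (heven : Even d)
    (hs : s + 1 ≤ d) (h0 : a 0 = 0) (htop : a (d + 2) = 0)
    (hrec : ∀ i ≤ d, a i + a (i + 2) + (if i = s ∨ i = s + 1 then b else 0) = 0) : b = 0 := by
  obtain ⟨m, rfl⟩ := heven
  obtain ⟨u, hu⟩ : ∃ u, 2 * u = s ∨ 2 * u = s + 1 := ⟨(s + 1) / 2, by omega⟩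
  have hfree : ∀ i ≤ m + m, i % 2 = 0 → i ≠ 2 * u → a i + a (i + 2) = 0 := by
    intro i hi hpar hne
    simpa [show ¬(i = s ∨ i = s + 1) by omega] using hrec i hi
  have hbelow : a (2 * u) = 0 := by
    simpa [h0] using eq_neg_one_pow_mul_of_add_add_two_eq_zero (a := a) (i := 0) (m := u)
      fun k hk => by simpa using hfree (2 * k) (by omega) (by omega) (by omega)
  have habove := eq_neg_one_pow_mul_of_add_add_two_eq_zero (a := a) (i := 2 * u + 2)
    (m := m - u) fun k hk => hfree _ (by omega) (by omega) (by omega)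
  rw [show 2 * u + 2 + 2 * (m - u) = m + m + 2 by omega, htop] at habove
  have hu2 : a (2 * u + 2) = 0 := by simpa using habove.symm
  simpa [hbelow, hu2, hu] using hrec (2 * u) (by omega)

theorem triangle_recurrence_eq_zero {d s : ℕ} {a : ℕ → ℝ} {b : ℝ} (heven : Even d)
    (hs : s + 1 ≤ d) (h0 : a 0 = 0) (htop : a (d + 2) = 0)
    (hrec : ∀ i ≤ d, a i + a (i + 2) + (if i = s ∨ i = s + 1 then b else 0) = 0)
    (hx : a (s + 1) + a (s + 2) = 0) : b = 0 ∧ ∀ j ≤ d + 2, a j = 0 := by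
  have hb := triangle_recurrence_coeff_eq_zero heven hs h0 htop hrec
  have hstep : ∀ i ≤ d, a i + a (i + 2) = 0 := fun i hi => by simpa [hb] using hrec i hi
  have hpow : ∀ r k, r + 2 * k ≤ d + 2 → a (r + 2 * k) = (-1) ^ k * a r :=
    fun r k hk => eq_neg_one_pow_mul_of_add_add_two_eq_zero fun l hl => hstep _ (by omega)
  have ha_even : ∀ k, 2 * k ≤ d + 2 → a (2 * k) = 0 := fun k hk => by
    simpa [h0] using hpow 0 k (by omega)
  have ha_odd : ∀ k, 2 * k + 1 ≤ d + 2 → a (2 * k + 1) = (-1) ^ k * a 1 := fun k hk => by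
    rw [add_comm]; exact hpow 1 k (by omega)
  have h1 : a 1 = 0 := by
    rcases Nat.even_or_odd' s with ⟨k, rfl | rfl⟩
    · rw [ha_odd k (by omega), show 2 * k + 2 = 2 * (k + 1) by ring,
        ha_even (k + 1) (by omega)] at hx
      simpa using hx
    · rw [show 2 * k + 1 + 1 = 2 * (k + 1) by ring, ha_even (k + 1) (by omega),
        show 2 * k + 1 + 2 = 2 * (k + 1) + 1 by ring, ha_odd (k + 1) (by omega)] at hx
      simpa using hx
  refine ⟨hb, fun j hj => ?_⟩
  rcases Nat.even_or_odd' j with ⟨k, rfl | rfl⟩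
  · exact ha_even k hj
  · rw [ha_odd k hj, h1, mul_zero]

theorem square_recurrence_eq {d s : ℕ} {a : ℕ → ℝ} {b : ℝ} (h0 : a 0 = 0) (h1 : a 1 = 0)
    (hrec : ∀ i ≤ d, a i + a (i + 2) + (if i = s ∨ i = s + 2 then b else 0) = 0) :
    ∀ j ≤ d + 2, a j = if j = s + 2 then -b else 0 := by
  intro j
  induction j using Nat.strong_induction_on with
  | _ j ih =>
    intro hj
    match j with
    | 0 => simp [h0]
    | 1 => simp [h1]
    | k + 2 =>
      have h := hrec k (by omega)
      rw [ih k (by omega) (by omega)] at h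
      split_ifs at h ⊢ <;> first | omega | linarith

structure SimpleGraph.IsGeodesic {V : Type*} (G : SimpleGraph V) (q : ℕ → V) (d : ℕ) :
    Prop where
  adj : ∀ i < d, G.Adj (q i) (q (i + 1))
  dist_eq : G.dist (q 0) (q d) = d

theorem disjoint_image_range {V : Type*} [DecidableEq V] {q : ℕ → V} {d : ℕ} {T : Finset V}
    (hT : ∀ u ∈ T, ∀ j ≤ d, u ≠ q j) : Disjoint ((range (d + 1)).image q) T := by
  refine disjoint_left.mpr fun u hu huT => ?_
  obtain ⟨j, hj, rfl⟩ := mem_image.mp hu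
  exact hT _ huT j (Nat.lt_succ_iff.mp (mem_range.mp hj)) rfl

theorem eq_zero_of_image_range_union {V : Type*} [DecidableEq V] {q : ℕ → V} {d : ℕ}
    {T : Finset V} {v : V → ℝ} (hout : ∀ u ∉ (range (d + 1)).image q ∪ T, v u = 0)
    (hpath : ∀ j ≤ d, v (q j) = 0) (hT : ∀ u ∈ T, v u = 0) : v = 0 := by
  funext w
  by_contra hw
  rcases mem_union.mp (not_imp_comm.mp (hout w) hw) with h | h
  · obtain ⟨j, hj, rfl⟩ := mem_image.mp h
    exact hw (hpath j (Nat.lt_succ_iff.mp (mem_range.mp hj)))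
  · exact hw (hT w h)

theorem SimpleGraph.sum_ite_adj_of_iff {V : Type*} {G : SimpleGraph V} [DecidableRel G.Adj]
    {q : ℕ → V} {d s t : ℕ} {x : V} (hst : s ≠ t) (hs : s ≤ d) (ht : t ≤ d)
    (hxq : ∀ j ≤ d, G.Adj x (q j) ↔ j = s ∨ j = t) (f : ℕ → ℝ) :
    ∑ j ∈ range (d + 1), (if G.Adj x (q j) then f j else 0) = f s + f t := by
  have hsplit : ∀ j ∈ range (d + 1), (if G.Adj x (q j) then f j else 0) =
      (if s = j then f j else 0) + (if t = j then f j else 0) := by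
    intro j hj
    rw [if_congr (hxq j (Nat.lt_succ_iff.mp (mem_range.mp hj))) rfl rfl]
    split_ifs <;> first | omega | simp
  rw [sum_congr rfl hsplit, sum_add_distrib, sum_ite_eq, sum_ite_eq,
    if_pos (mem_range.mpr (by omega)), if_pos (mem_range.mpr (by omega))]

namespace SimpleGraph.IsGeodesic

variable {V : Type*} {G : SimpleGraph V} {q : ℕ → V} {d : ℕ}

theorem dist_le (hG : G.Connected) (hq : G.IsGeodesic q d) {i k : ℕ} (h : i + k ≤ d) :
    G.dist (q i) (q (i + k)) ≤ k := by
  induction k with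
  | zero => simp
  | succ k ih =>
    have hstep : G.dist (q (i + k)) (q (i + k + 1)) = 1 :=
      dist_eq_one_iff_adj.mpr (hq.adj (i + k) (by omega))
    have := hG.dist_triangle (u := q i) (v := q (i + k)) (w := q (i + k + 1))
    have := ih (by omega)
    rw [← add_assoc]
    omega

theorem dist_eq_sub (hG : G.Connected) (hq : G.IsGeodesic q d) {i j : ℕ} (hij : i ≤ j)
    (hj : j ≤ d) : G.dist (q i) (q j) = j - i := by
  have h0i := hq.dist_le hG (i := 0) (k := i) (by omega)
  have hij' := hq.dist_le hG (i := i) (k := j - i) (by omega)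
  have hjd := hq.dist_le hG (i := j) (k := d - j) (by omega)
  rw [Nat.add_sub_cancel' hij] at hij'
  rw [Nat.add_sub_cancel' hj] at hjd
  have := hG.dist_triangle (u := q 0) (v := q i) (w := q j)
  have := hG.dist_triangle (u := q 0) (v := q j) (w := q d)
  simp only [zero_add] at h0i
  have := hq.dist_eq
  omega

theorem dist_eq_dist (hG : G.Connected) (hq : G.IsGeodesic q d) {i j : ℕ} (hi : i ≤ d)
    (hj : j ≤ d) : G.dist (q i) (q j) = Nat.dist i j := by
  rcases le_total i j with hij | hji
  · rw [hq.dist_eq_sub hG hij hj, Nat.dist_eq_sub_of_le hij]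
  · rw [dist_comm, hq.dist_eq_sub hG hji hi, Nat.dist_comm, Nat.dist_eq_sub_of_le hji]

theorem injOn (hG : G.Connected) (hq : G.IsGeodesic q d) :
    Set.InjOn q ↑(range (d + 1)) := by
  intro i hi j hj hij
  simp only [coe_range, Set.mem_Iio] at hi hj
  have := hq.dist_eq_dist hG (by omega : i ≤ d) (by omega : j ≤ d)
  rw [hij, dist_self] at this
  exact Nat.eq_of_dist_eq_zero this.symm

theorem adj_iff (hG : G.Connected) (hq : G.IsGeodesic q d) {i j : ℕ} (hi : i ≤ d)
    (hj : j ≤ d) : G.Adj (q i) (q j) ↔ j = i + 1 ∨ i = j + 1 := by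
  rw [← dist_eq_one_iff_adj, hq.dist_eq_dist hG hi hj, Nat.dist]
  omega

theorem le_add_two_of_adj (hG : G.Connected) (hq : G.IsGeodesic q d) {x : V} {s t : ℕ}
    (hst : s ≤ t) (ht : t ≤ d) (hxs : G.Adj x (q s)) (hxt : G.Adj x (q t)) : t ≤ s + 2 := by
  have := hG.dist_triangle (u := q s) (v := x) (w := q t)
  rw [hq.dist_eq_sub hG hst ht, dist_comm, dist_eq_one_iff_adj.mpr hxs,
    dist_eq_one_iff_adj.mpr hxt] at this
  omega

theorem ne_of_not_adj_iff (hG : G.Connected) (hq : G.IsGeodesic q d) {x y : V} {s : ℕ}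
    (hs : s + 2 ≤ d) (hxq : ∀ j ≤ d, G.Adj x (q j) ↔ j = s ∨ j = s + 2)
    (hy : ¬(G.Adj x y ↔ G.Adj (q (s + 1)) y)) : y ≠ x ∧ ∀ j ≤ d, y ≠ q j := by
  refine ⟨?_, ?_⟩
  · rintro rfl
    refine hy (iff_of_false (G.irrefl) fun h => ?_)
    have := (hxq (s + 1) (by omega)).mp h.symm
    omega
  · rintro j hj rfl
    refine hy ((hxq j hj).trans ?_)
    rw [hq.adj_iff hG (by omega) hj]
    omega

theorem card_image_union [DecidableEq V] (hG : G.Connected) (hq : G.IsGeodesic q d)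
    {T : Finset V} (hT : ∀ u ∈ T, ∀ j ≤ d, u ≠ q j) :
    #((range (d + 1)).image q ∪ T) = d + 1 + #T := by
  rw [card_union_of_disjoint (disjoint_image_range hT), card_image_of_injOn (hq.injOn hG),
    card_range]

variable [DecidableRel G.Adj]

theorem sum_ite_adj (hG : G.Connected) (hq : G.IsGeodesic q d) (f : ℕ → ℝ) {i : ℕ}
    (hi : i ≤ d) : ∑ j ∈ range (d + 1), (if G.Adj (q i) (q j) then f j else 0) =
      shiftPad d f i + shiftPad d f (i + 2) := by
  rw [← sum_range_ite_neighbour]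
  refine sum_congr rfl fun j hj => ?_
  rw [if_congr (hq.adj_iff hG hi (Nat.lt_succ_iff.mp (mem_range.mp hj))) rfl rfl]

theorem adjMatrix_mulVec_apply [Fintype V] [DecidableEq V] (hG : G.Connected)
    (hq : G.IsGeodesic q d) {T : Finset V} (hT : ∀ u ∈ T, ∀ j ≤ d, u ≠ q j) {v : V → ℝ}
    (hv : ∀ u ∉ (range (d + 1)).image q ∪ T, v u = 0) (w : V) :
    (G.adjMatrix ℝ *ᵥ v) w = ∑ j ∈ range (d + 1), (if G.Adj w (q j) then v (q j) else 0) +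
      ∑ u ∈ T, (if G.Adj w u then v u else 0) := by
  rw [G.adjMatrix_mulVec_apply_of_support hv, sum_union (disjoint_image_range hT),
    sum_image (hq.injOn hG)]

end SimpleGraph.IsGeodesic

section TwoNeighbours

variable {V : Type} [Fintype V] [DecidableEq V] {G : SimpleGraph V} [DecidableRel G.Adj]
  {q : ℕ → V} {d : ℕ}

theorem triangle_kernel_vector_eq_zero (hG : G.Connected) (hq : G.IsGeodesic q d)
    (heven : Even d) {x : V} (hx : ∀ j ≤ d, x ≠ q j) {s : ℕ} (hs : s + 1 ≤ d)
    (hxq : ∀ j ≤ d, G.Adj x (q j) ↔ j = s ∨ j = s + 1) {v : V → ℝ}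
    (hv : G.adjMatrix ℝ *ᵥ v = 0) (hout : ∀ u ∉ (range (d + 1)).image q ∪ {x}, v u = 0) :
    v = 0 := by
  have hT : ∀ u ∈ ({x} : Finset V), ∀ j ≤ d, u ≠ q j := by simpa using hx
  have hrow : ∀ w, ∑ j ∈ range (d + 1), (if G.Adj w (q j) then v (q j) else 0) +
      (if G.Adj w x then v x else 0) = 0 := fun w => by
    simpa [hq.adjMatrix_mulVec_apply hG hT hout w] using congrFun hv w
  set a := shiftPad d fun j => v (q j)
  have ha_succ : ∀ j ≤ d, a (j + 1) = v (q j) := fun j hj => shiftPad_succ_of_le _ hj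
  have hrec : ∀ i ≤ d, a i + a (i + 2) + (if i = s ∨ i = s + 1 then v x else 0) = 0 := by
    intro i hi
    have := hrow (q i)
    rw [hq.sum_ite_adj hG _ hi] at this
    simpa only [G.adj_comm (q i) x, hxq i hi] using this
  have hxrow : a (s + 1) + a (s + 2) = 0 := by
    have := hrow x
    rwa [G.sum_ite_adj_of_iff (by omega) (by omega) hs hxq, if_neg (G.irrefl), add_zero,
      ← ha_succ s (by omega), ← ha_succ (s + 1) hs] at this
  obtain ⟨hb, ha⟩ :=
    triangle_recurrence_eq_zero heven hs rfl (by simp [a, shiftPad]) hrec hxrow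
  refine eq_zero_of_image_range_union hout (fun j hj => ?_) (by simpa using hb)
  rw [← ha_succ j hj, ha (j + 1) (by omega)]

theorem nullity_add_le_of_triangle (hG : G.Connected) (hq : G.IsGeodesic q d) (heven : Even d)
    {x : V} (hx : ∀ j ≤ d, x ≠ q j) {s : ℕ} (hs : s + 1 ≤ d)
    (hxq : ∀ j ≤ d, G.Adj x (q j) ↔ j = s ∨ j = s + 1) :
    nullity G + d + 2 ≤ Fintype.card V := by
  have hT : ∀ u ∈ ({x} : Finset V), ∀ j ≤ d, u ≠ q j := by simpa using hx
  set S := (range (d + 1)).image q ∪ {x}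
  have hnull := nullity_le_card G Sᶜ fun v hv hU =>
    triangle_kernel_vector_eq_zero hG hq heven hx hs hxq hv fun u hu => hU u (mem_compl.mpr hu)
  have hS := hq.card_image_union hG hT ▸ card_le_univ S
  rw [card_compl, hq.card_image_union hG hT] at hnull
  simp only [card_singleton] at hnull hS
  omega

theorem square_kernel_vector_eq_zero (hG : G.Connected) (hq : G.IsGeodesic q d)
    {x y : V} (hx : ∀ j ≤ d, x ≠ q j) {s : ℕ} (hs : s + 2 ≤ d)
    (hxq : ∀ j ≤ d, G.Adj x (q j) ↔ j = s ∨ j = s + 2)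
    (hy : ¬(G.Adj x y ↔ G.Adj (q (s + 1)) y)) {v : V → ℝ} (hv : G.adjMatrix ℝ *ᵥ v = 0)
    (hout : ∀ u ∉ (range (d + 1)).image q ∪ {x, y}, v u = 0) (hv0 : v (q 0) = 0) :
    v = 0 := by
  obtain ⟨hyx, hyq⟩ := hq.ne_of_not_adj_iff hG hs hxq hy
  have hT : ∀ u ∈ ({x, y} : Finset V), ∀ j ≤ d, u ≠ q j := by
    simpa [forall_and] using ⟨hx, hyq⟩
  have hrow : ∀ w, ∑ j ∈ range (d + 1), (if G.Adj w (q j) then v (q j) else 0) +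
      (if G.Adj w x then v x else 0) + (if G.Adj w y then v y else 0) = 0 := fun w => by
    simpa [hq.adjMatrix_mulVec_apply hG hT hout w, sum_pair hyx.symm, add_assoc]
      using congrFun hv w
  set a := shiftPad d fun j => v (q j)
  have ha_succ : ∀ j ≤ d, a (j + 1) = v (q j) := fun j hj => shiftPad_succ_of_le _ hj
  -- `x` and `q (s + 1)` have the same neighbours on `P ∪ {x}`, so their rows differ only at `y`
  have hvy : v y = 0 := by
    have hxrow := hrow x
    have hmid := hrow (q (s + 1))
    rw [G.sum_ite_adj_of_iff (by omega) (by omega) hs hxq, if_neg (G.irrefl), add_zero]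
      at hxrow
    have hnx : ¬G.Adj (q (s + 1)) x := fun h => by
      have := (hxq (s + 1) (by omega)).mp h.symm
      omega
    rw [hq.sum_ite_adj hG _ (by omega), if_neg hnx, add_zero, shiftPad_succ_of_le _ (by omega),
      show s + 1 + 2 = s + 2 + 1 by ring, shiftPad_succ_of_le _ hs] at hmid
    exact eq_zero_of_ite_eq_ite hy (by linarith)
  have hrec : ∀ i ≤ d, a i + a (i + 2) + (if i = s ∨ i = s + 2 then v x else 0) = 0 := by
    intro i hi
    have := hrow (q i)
    rw [hq.sum_ite_adj hG _ hi, hvy, ite_self, add_zero] at this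
    simpa only [G.adj_comm (q i) x, hxq i hi] using this
  have ha := square_recurrence_eq (a := a) rfl ((ha_succ 0 (by omega)).trans hv0) hrec
  have hpath : ∀ j ≤ d, v (q j) = if j = s + 1 then -v x else 0 := fun j hj => by
    rw [← ha_succ j hj, ha (j + 1) (by omega)]
    simp
  have hvx : v x = 0 := by
    have hyrow := hrow y
    rw [if_neg (G.irrefl), add_zero, sum_eq_single_of_mem (s + 1) (mem_range.mpr (by omega))
      fun j hj hne => by simp [hpath j (Nat.lt_succ_iff.mp (mem_range.mp hj)), hne],
      hpath _ (by omega), if_pos rfl] at hyrow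
    simp only [G.adj_comm y] at hyrow
    refine eq_zero_of_ite_eq_ite hy ?_
    split_ifs at hyrow ⊢ <;> linarith
  refine eq_zero_of_image_range_union hout (fun j hj => ?_) (by simp [hvx, hvy])
  rw [hpath j hj, hvx, neg_zero, ite_self]

theorem nullity_add_le_of_square (hG : G.Connected) (hq : G.IsGeodesic q d)
    {x y : V} (hx : ∀ j ≤ d, x ≠ q j) {s : ℕ} (hs : s + 2 ≤ d)
    (hxq : ∀ j ≤ d, G.Adj x (q j) ↔ j = s ∨ j = s + 2)
    (hy : ¬(G.Adj x y ↔ G.Adj (q (s + 1)) y)) :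
    nullity G + d + 2 ≤ Fintype.card V := by
  obtain ⟨hyx, hyq⟩ := hq.ne_of_not_adj_iff hG hs hxq hy
  have hT : ∀ u ∈ ({x, y} : Finset V), ∀ j ≤ d, u ≠ q j := by
    simpa [forall_and] using ⟨hx, hyq⟩
  set S := (range (d + 1)).image q ∪ {x, y}
  have hnull := (nullity_le_card G (insert (q 0) Sᶜ) fun v hv hU =>
    square_kernel_vector_eq_zero hG hq hx hs hxq hy hv
      (fun u hu => hU u (mem_insert_of_mem (mem_compl.mpr hu)))
      (hU _ (mem_insert_self _ _))).trans (card_insert_le _ _)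
  have hS := hq.card_image_union hG hT ▸ card_le_univ S
  rw [card_compl, hq.card_image_union hG hT] at hnull
  simp only [card_pair hyx.symm] at hnull hS
  omega

theorem nullity_add_le_of_two_neighbours (hG : G.Connected)
    (hreduced : ∀ a b : V, G.neighborSet a = G.neighborSet b → a = b)
    (hq : G.IsGeodesic q d) (heven : Even d) {x : V} (hx : ∀ j ≤ d, x ≠ q j) {s t : ℕ}
    (hst : s ≠ t) (hs : s ≤ d) (ht : t ≤ d) (hxq : ∀ j ≤ d, G.Adj x (q j) ↔ j = s ∨ j = t) :
    nullity G + d + 2 ≤ Fintype.card V := by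
  wlog hlt : s < t generalizing s t
  · exact this hst.symm ht hs (fun j hj => (hxq j hj).trans or_comm) (by omega)
  have := hq.le_add_two_of_adj hG hlt.le ht ((hxq s hs).mpr (.inl rfl))
    ((hxq t ht).mpr (.inr rfl))
  obtain rfl | rfl : t = s + 1 ∨ t = s + 2 := by omega
  · exact nullity_add_le_of_triangle hG hq heven hx ht hxq
  · obtain ⟨y, hy⟩ : ∃ y, ¬(G.Adj x y ↔ G.Adj (q (s + 1)) y) := by
      by_contra! h
      exact hx (s + 1) (by omega) (hreduced _ _ (Set.ext h))
    exact nullity_add_le_of_square hG hq hx ht hxq hy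

end TwoNeighbours

/-- Let `G` be connected, twin-free, with even diameter `d`, let
`p 0 ∼ ⋯ ∼ p d` be a diameter path, and suppose `η(G) = n - d - 1`. Then no
vertex outside the path has exactly two neighbours on the path. -/
theorem stmt15 {V : Type} [Fintype V] (G : SimpleGraph V) [DecidableRel G.Adj]
    (hG : G.Connected) (heven : Even G.diam)
    (hreduced : ∀ a b : V, G.neighborSet a = G.neighborSet b → a = b)
    (p : Fin (G.diam + 1) → V)
    (hadj : ∀ i : Fin G.diam, G.Adj (p i.castSucc) (p i.succ))
    (hdist : G.dist (p 0) (p (Fin.last G.diam)) = G.diam)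
    (hnull : nullity G = Fintype.card V - G.diam - 1) :
    ∀ x : V, x ∉ Set.range p →
      (Finset.univ.filter fun i : Fin (G.diam + 1) => G.Adj x (p i)).card ≠ 2 := by
  classical
  intro x hx hcard
  set q : ℕ → V := fun j => p (Fin.ofNat _ j) with hq_def
  have hp (i : Fin (G.diam + 1)) : p i = q i := by simp only [hq_def, Fin.ofNat_val_eq_self]
  have hq : G.IsGeodesic q G.diam :=
    ⟨fun i hi => by simpa only [hp, Fin.val_castSucc, Fin.val_succ] using hadj ⟨i, hi⟩,
      by simpa only [hp, Fin.val_zero, Fin.val_last] using hdist⟩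
  have hx_ne : ∀ j ≤ G.diam, x ≠ q j := fun j hj h => hx ⟨⟨j, by omega⟩, by rw [hp, h]⟩
  obtain ⟨a, b, hab, hfilter⟩ := Finset.card_eq_two.mp hcard
  have hxq : ∀ j ≤ G.diam, G.Adj x (q j) ↔ j = a ∨ j = b := by
    intro j hj
    simpa [hp, Fin.ext_iff] using congrArg (⟨j, by omega⟩ ∈ ·) hfilter
  have := nullity_add_le_of_two_neighbours hG hreduced hq heven hx_ne (Fin.val_ne_of_ne hab)
    (Nat.lt_succ_iff.mp a.2) (Nat.lt_succ_iff.mp b.2) hxq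
  omega
end
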